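/- Let η₁ ∈ (0,1). Suppose s ∈ ℝ^{|I|} satisfies m(s) ≤ m(ŝ) and the acceptance test f(x) − f(x + U_I s) ≥ η₁ (q(0) − q(s)). Then f(x) − f(x + U_I s) ≥ η₁ ((1 − β) α̂ ‖∇_I f(x)‖² + (σ/6)‖s‖³). -/

import Mathlib

open scoped RealInnerProductSpace

noncomputable section

/-- `U_I`: extension by zero from block coordinates to full coordinates. -/
def blockIncl {n : ℕ} (I : Finset (Fin n)) :
    EuclideanSpace ℝ ↥I →ₗ[ℝ] EuclideanSpace ℝ (Fin n) where
  toFun s := WithLp.toLp 2 (fun i => if h : i ∈ I then s ⟨i, h⟩ else 0)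
  map_add' s t := by ext i; by_cases h : i ∈ I <;> simp [h]
  map_smul' c s := by ext i; by_cases h : i ∈ I <;> simp [h]

/-- `U_Iᵀ`: restriction of a vector to the block coordinates. -/
def blockRestr {n : ℕ} (I : Finset (Fin n)) :
    EuclideanSpace ℝ (Fin n) →ₗ[ℝ] EuclideanSpace ℝ ↥I where
  toFun x := WithLp.toLp 2 (fun i => x i)
  map_add' x y := by ext i; simp
  map_smul' c x := by ext i; simp

/-- Block Hessian `U_Iᵀ H U_I` as a continuous linear map. -/
def blockHess {n : ℕ} (I : Finset (Fin n))
    (H : EuclideanSpace ℝ (Fin n) →L[ℝ] EuclideanSpace ℝ (Fin n)) :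
    EuclideanSpace ℝ ↥I →L[ℝ] EuclideanSpace ℝ ↥I :=
  LinearMap.toContinuousLinearMap
    ((blockRestr I) ∘ₗ ((H : EuclideanSpace ℝ (Fin n) →ₗ[ℝ] EuclideanSpace ℝ (Fin n)) ∘ₗ blockIncl I))

/-- Quadratic model `q(s) = f₀ + gᵀs + (1/2) sᵀ H s`. -/
def quadModel {E : Type*} [NormedAddCommGroup E] [InnerProductSpace ℝ E]
    (f₀ : ℝ) (g : E) (H : E →L[ℝ] E) (s : E) : ℝ :=
  f₀ + ⟪g, s⟫ + (1 / 2) * ⟪s, H s⟫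

/-- Cubic model `m(s) = q(s) + (σ/6) ‖s‖³`. -/
def cubicModel {E : Type*} [NormedAddCommGroup E] [InnerProductSpace ℝ E]
    (f₀ : ℝ) (g : E) (H : E →L[ℝ] E) (σ : ℝ) (s : E) : ℝ :=
  quadModel f₀ g H s + σ / 6 * ‖s‖ ^ 3

/-- Gradient of the cubic model: `∇m(s) = g + H s + (σ/2) ‖s‖ s`. -/
def cubicModelGrad {E : Type*} [NormedAddCommGroup E] [InnerProductSpace ℝ E]
    (g : E) (H : E →L[ℝ] E) (σ : ℝ) (s : E) : E :=
  g + H s + (σ / 2 * ‖s‖) • s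

/-- The stepsize `α̂ = min{β/‖H‖, √(3β/(σ‖g‖))}`, the first argument being `+∞` if `H = 0`. -/
def alphaHat {E : Type*} [NormedAddCommGroup E] [InnerProductSpace ℝ E]
    (β σ : ℝ) (g : E) (H : E →L[ℝ] E) : ℝ :=
  haveI := Classical.dec (H = 0)
  if H = 0 then Real.sqrt (3 * β / (σ * ‖g‖))
  else min (β / ‖H‖) (Real.sqrt (3 * β / (σ * ‖g‖)))

/-- The Cauchy-like point `ŝ = -α̂ g`. -/
def sHat {E : Type*} [NormedAddCommGroup E] [InnerProductSpace ℝ E]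
    (β σ : ℝ) (g : E) (H : E →L[ℝ] E) : E :=
  -(alphaHat β σ g H) • g

/-!
Along the steepest-descent ray, `α̂ ‖H‖ ≤ β` and `σ ‖g‖ α̂² ≤ 3β` make the curvature term and the
cubic term of `m(-α̂ g)` each at most `(β/2) α̂ ‖g‖²`, so `m(0) - m(ŝ) ≥ (1 - β) α̂ ‖g‖²`. Since
`q(s) = m(s) - (σ/6)‖s‖³` and `m(s) ≤ m(ŝ)`, the predicted decrease `q(0) - q(s)` is at least
`(1 - β) α̂ ‖g‖² + (σ/6)‖s‖³`, and the acceptance test transfers this bound to `f`.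
-/

section Models

variable {E : Type*} [NormedAddCommGroup E] [InnerProductSpace ℝ E]
  {β σ : ℝ} {g : E} {H : E →L[ℝ] E}

theorem alphaHat_nonneg (hβ : 0 ≤ β) : 0 ≤ alphaHat β σ g H := by
  unfold alphaHat
  split_ifs
  · exact Real.sqrt_nonneg _
  · exact le_min (by positivity) (Real.sqrt_nonneg _)

theorem alphaHat_le_sqrt : alphaHat β σ g H ≤ √(3 * β / (σ * ‖g‖)) := by
  unfold alphaHat
  split_ifs
  · exact le_rfl
  · exact min_le_right _ _

theorem alphaHat_mul_opNorm_le (hβ : 0 ≤ β) : alphaHat β σ g H * ‖H‖ ≤ β := by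
  unfold alphaHat
  split_ifs with hH
  · simpa [hH] using hβ
  · calc min (β / ‖H‖) _ * ‖H‖ ≤ β / ‖H‖ * ‖H‖ := by gcongr; exact min_le_left _ _
      _ = β := div_mul_cancel₀ _ (norm_ne_zero_iff.mpr hH)

theorem mul_norm_mul_alphaHat_sq_le (hβ : 0 ≤ β) :
    σ * ‖g‖ * alphaHat β σ g H ^ 2 ≤ 3 * β := by
  rcases le_or_gt (σ * ‖g‖) 0 with hc | hc
  · nlinarith [sq_nonneg (alphaHat β σ g H)]
  · calc σ * ‖g‖ * alphaHat β σ g H ^ 2 ≤ σ * ‖g‖ * √(3 * β / (σ * ‖g‖)) ^ 2 := by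
          gcongr
          · exact alphaHat_nonneg hβ
          · exact alphaHat_le_sqrt
      _ = 3 * β := by rw [Real.sq_sqrt (by positivity), mul_div_cancel₀ _ hc.ne']

theorem inner_apply_self_le (H : E →L[ℝ] E) (v : E) : ⟪v, H v⟫ ≤ ‖H‖ * ‖v‖ ^ 2 :=
  calc ⟪v, H v⟫ ≤ ‖v‖ * ‖H v‖ := real_inner_le_norm _ _
    _ ≤ ‖v‖ * (‖H‖ * ‖v‖) := by gcongr; exact H.le_opNorm v
    _ = ‖H‖ * ‖v‖ ^ 2 := by ring

theorem quadModel_zero (f₀ : ℝ) (g : E) (H : E →L[ℝ] E) : quadModel f₀ g H 0 = f₀ := by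
  simp [quadModel]

theorem cubicModel_neg_smul (f₀ a : ℝ) (g : E) (H : E →L[ℝ] E) (σ : ℝ) :
    cubicModel f₀ g H σ (-a • g) =
      f₀ - a * ‖g‖ ^ 2 + a ^ 2 / 2 * ⟪g, H g⟫ + σ / 6 * |a| ^ 3 * ‖g‖ ^ 3 := by
  simp only [cubicModel, quadModel, map_smul, real_inner_smul_left, real_inner_smul_right,
    real_inner_self_eq_norm_sq, norm_smul, Real.norm_eq_abs, abs_neg]
  ring

theorem cubicModel_sHat_decrease (f₀ : ℝ) (hβ : 0 ≤ β) :
    (1 - β) * alphaHat β σ g H * ‖g‖ ^ 2 ≤ f₀ - cubicModel f₀ g H σ (sHat β σ g H) := by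
  set A := alphaHat β σ g H
  have hA : 0 ≤ A := alphaHat_nonneg hβ
  have curvature : A ^ 2 / 2 * ⟪g, H g⟫ ≤ β / 2 * (A * ‖g‖ ^ 2) :=
    calc A ^ 2 / 2 * ⟪g, H g⟫ ≤ A ^ 2 / 2 * (‖H‖ * ‖g‖ ^ 2) := by
          gcongr; exact inner_apply_self_le H g
      _ = A * ‖H‖ * (A * ‖g‖ ^ 2) / 2 := by ring
      _ ≤ β * (A * ‖g‖ ^ 2) / 2 := by gcongr; exact alphaHat_mul_opNorm_le hβ
      _ = β / 2 * (A * ‖g‖ ^ 2) := by ring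
  have cubic : σ / 6 * |A| ^ 3 * ‖g‖ ^ 3 ≤ β / 2 * (A * ‖g‖ ^ 2) :=
    calc σ / 6 * |A| ^ 3 * ‖g‖ ^ 3 = σ * ‖g‖ * A ^ 2 * (A * ‖g‖ ^ 2) / 6 := by
          rw [abs_of_nonneg hA]; ring
      _ ≤ 3 * β * (A * ‖g‖ ^ 2) / 6 := by
          gcongr ?_ * _ / _
          exact mul_norm_mul_alphaHat_sq_le hβ
      _ = β / 2 * (A * ‖g‖ ^ 2) := by ring
  rw [sHat, cubicModel_neg_smul]
  linarith

theorem quadModel_decrease_of_cubicModel_le_sHat (f₀ : ℝ) (hβ : 0 ≤ β) {s : E}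
    (hs : cubicModel f₀ g H σ s ≤ cubicModel f₀ g H σ (sHat β σ g H)) :
    (1 - β) * alphaHat β σ g H * ‖g‖ ^ 2 + σ / 6 * ‖s‖ ^ 3 ≤
      quadModel f₀ g H 0 - quadModel f₀ g H s := by
  have hm : cubicModel f₀ g H σ s = quadModel f₀ g H s + σ / 6 * ‖s‖ ^ 3 := rfl
  rw [quadModel_zero]
  linarith [cubicModel_sHat_decrease (g := g) (H := H) (σ := σ) f₀ hβ]

end Models

theorem stmt7_general (n : ℕ)
    (f : EuclideanSpace ℝ (Fin n) → ℝ)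
    (gradf : EuclideanSpace ℝ (Fin n) → EuclideanSpace ℝ (Fin n))
    (hessf : EuclideanSpace ℝ (Fin n) → (EuclideanSpace ℝ (Fin n) →L[ℝ] EuclideanSpace ℝ (Fin n)))
    (x : EuclideanSpace ℝ (Fin n)) (I : Finset (Fin n))
    (σ β η₁ : ℝ) (hβ0 : 0 < β) (hη₁0 : 0 < η₁)
    (s : EuclideanSpace ℝ ↥I)
    (hs : cubicModel (f x) (blockRestr I (gradf x)) (blockHess I (hessf x)) σ s ≤
      cubicModel (f x) (blockRestr I (gradf x)) (blockHess I (hessf x)) σ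
        (sHat β σ (blockRestr I (gradf x)) (blockHess I (hessf x))))
    (hacc : η₁ * (quadModel (f x) (blockRestr I (gradf x)) (blockHess I (hessf x)) 0 -
        quadModel (f x) (blockRestr I (gradf x)) (blockHess I (hessf x)) s) ≤
      f x - f (x + blockIncl I s)) :
    η₁ * ((1 - β) * alphaHat β σ (blockRestr I (gradf x)) (blockHess I (hessf x)) *
        ‖blockRestr I (gradf x)‖ ^ 2 + σ / 6 * ‖s‖ ^ 3) ≤
      f x - f (x + blockIncl I s) :=
  (mul_le_mul_of_nonneg_left
    (quadModel_decrease_of_cubicModel_le_sHat (f x) hβ0.le hs) hη₁0.le).trans hacc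

theorem stmt7 (n : ℕ) (hn : 0 < n)
    (f : EuclideanSpace ℝ (Fin n) → ℝ)
    (gradf : EuclideanSpace ℝ (Fin n) → EuclideanSpace ℝ (Fin n))
    (hessf : EuclideanSpace ℝ (Fin n) → (EuclideanSpace ℝ (Fin n) →L[ℝ] EuclideanSpace ℝ (Fin n)))
    (hf : ContDiff ℝ 2 f)
    (hgradf : ∀ x, HasGradientAt f (gradf x) x)
    (hhessf : ∀ x, HasFDerivAt gradf (hessf x) x)
    (x : EuclideanSpace ℝ (Fin n)) (I : Finset (Fin n))
    (hg : blockRestr I (gradf x) ≠ 0)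
    (σ β η₁ : ℝ) (hσ : 0 < σ) (hβ0 : 0 < β) (hβ1 : β < 1) (hη₁0 : 0 < η₁) (hη₁1 : η₁ < 1)
    (s : EuclideanSpace ℝ ↥I)
    (hs : cubicModel (f x) (blockRestr I (gradf x)) (blockHess I (hessf x)) σ s ≤
      cubicModel (f x) (blockRestr I (gradf x)) (blockHess I (hessf x)) σ
        (sHat β σ (blockRestr I (gradf x)) (blockHess I (hessf x))))
    (hacc : η₁ * (quadModel (f x) (blockRestr I (gradf x)) (blockHess I (hessf x)) 0 -
        quadModel (f x) (blockRestr I (gradf x)) (blockHess I (hessf x)) s) ≤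
      f x - f (x + blockIncl I s)) :
    η₁ * ((1 - β) * alphaHat β σ (blockRestr I (gradf x)) (blockHess I (hessf x)) *
        ‖blockRestr I (gradf x)‖ ^ 2 + σ / 6 * ‖s‖ ^ 3) ≤
      f x - f (x + blockIncl I s) :=
  stmt7_general n f gradf hessf x I σ β η₁ hβ0 hη₁0 s hs hacc

end
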